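/- Let A > 0 and let U : [−1,1] → ℝ be continuous on [−1,1] and continuously differentiable on (−1,1), satisfying |U(y)| ≤ A(1−y²)(1 + |ln(1−y²)|) and |U'(y)| ≤ A(1 + |ln(1−y²)|) for all y ∈ (−1,1). Then the function y ↦ y|U'(y)|² − ((2−y²)/(1−y²)) U(y) − (y/(1−y²)) U(y)² is absolutely integrable on (−1,1), so that the constant b := ∫_{−1}^{1} ( y|U'(y)|² − ((2−y²)/(1−y²)) U(y) − (y/(1−y²)) U(y)² ) dy is well defined and finite. -/
import Mathlib

open MeasureTheory Set

lemma aux_log_bound {t : ℝ} (ht : 0 < t) (ht1 : t ≤ 1) :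
    1 + |Real.log t| ≤ 4 * t ^ (-(1/4) : ℝ) := by
  have hlt : Real.log t ≤ 0 := Real.log_nonpos ht.le ht1
  have h1 : Real.log (t ^ (-(1/4) : ℝ)) ≤ t ^ (-(1/4) : ℝ) - 1 :=
    Real.log_le_sub_one_of_pos (Real.rpow_pos_of_pos ht _)
  rw [Real.log_rpow ht] at h1
  rw [abs_of_nonpos hlt]
  linarith

lemma aux_sq_log_bound {t : ℝ} (ht : 0 < t) (ht1 : t ≤ 1) :
    (1 + |Real.log t|) ^ 2 ≤ 16 * t ^ (-(1/2) : ℝ) := by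
  have h := aux_log_bound ht ht1
  have h0 : (0:ℝ) ≤ 1 + |Real.log t| := by positivity
  have h2 : (1 + |Real.log t|) ^ 2 ≤ (4 * t ^ (-(1/4) : ℝ)) ^ 2 :=
    pow_le_pow_left₀ h0 h 2
  have h3 : (t ^ (-(1/4) : ℝ)) ^ 2 = t ^ (-(1/2) : ℝ) := by
    rw [← Real.rpow_natCast (t ^ (-(1/4) : ℝ)) 2, ← Real.rpow_mul ht.le]
    norm_num
  calc (1 + |Real.log t|) ^ 2 ≤ (4 * t ^ (-(1/4) : ℝ)) ^ 2 := h2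
    _ = 16 * (t ^ (-(1/4) : ℝ)) ^ 2 := by ring
    _ = 16 * t ^ (-(1/2) : ℝ) := by rw [h3]

lemma aux_integrable :
    IntegrableOn (fun y : ℝ => (1 - y ^ 2) ^ (-(1/2) : ℝ)) (Ioo (-1 : ℝ) 1) := by
  have base : IntervalIntegrable (fun x : ℝ => x ^ (-(1/2) : ℝ)) volume 0 1 :=
    intervalIntegral.intervalIntegrable_rpow' (by norm_num)
  have hsub : Ioo (-1 : ℝ) 1 ⊆ Ioc (-1) 0 ∪ Ioo 0 1 := by
    intro y hy
    rcases le_or_gt y 0 with h | h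
    · exact Or.inl ⟨hy.1, h⟩
    · exact Or.inr ⟨h, hy.2⟩
  refine IntegrableOn.mono_set ?_ hsub
  apply IntegrableOn.union
  · -- on Ioc (-1) 0, dominated by (y+1)^(-1/2)
    have h1 : IntervalIntegrable (fun x : ℝ => (x + 1) ^ (-(1/2) : ℝ)) volume (0 - 1) (1 - 1) :=
      base.comp_add_right 1
    norm_num at h1
    have hg : IntegrableOn (fun x : ℝ => (x + 1) ^ (-(1/2) : ℝ)) (Ioc (-1 : ℝ) 0) := h1.1
    apply Integrable.mono' hg
    · apply ContinuousOn.aestronglyMeasurable _ measurableSet_Ioc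
      apply ContinuousOn.rpow_const
      · fun_prop
      · intro x hx
        left
        have : x ^ 2 < 1 := by nlinarith [hx.1, hx.2]
        nlinarith
    · rw [ae_restrict_iff' measurableSet_Ioc]
      filter_upwards with y hy
      have h1y : 0 < y + 1 := by linarith [hy.1]
      have hle : y + 1 ≤ 1 - y ^ 2 := by nlinarith [hy.1, hy.2]
      rw [Real.norm_eq_abs, abs_of_nonneg (Real.rpow_nonneg (by linarith) _)]
      exact Real.rpow_le_rpow_of_nonpos h1y hle (by norm_num)
  · -- on Ioo 0 1, dominated by (1-y)^(-1/2)
    have h1 : IntervalIntegrable (fun x : ℝ => (1 - x) ^ (-(1/2) : ℝ)) volume (1 - 0) (1 - 1) :=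
      base.comp_sub_left 1
    norm_num at h1
    have hg : IntegrableOn (fun x : ℝ => (1 - x) ^ (-(1/2) : ℝ)) (Ioo (0 : ℝ) 1) :=
      (h1.symm.1.mono_set Ioo_subset_Ioc_self)
    apply Integrable.mono' hg
    · apply ContinuousOn.aestronglyMeasurable _ measurableSet_Ioo
      apply ContinuousOn.rpow_const
      · fun_prop
      · intro x hx
        left
        have : x ^ 2 < 1 := by nlinarith [hx.1, hx.2]
        nlinarith
    · rw [ae_restrict_iff' measurableSet_Ioo]
      filter_upwards with y hy
      have h1y : 0 < 1 - y := by linarith [hy.2]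
      have hle : 1 - y ≤ 1 - y ^ 2 := by nlinarith [hy.1, hy.2]
      rw [Real.norm_eq_abs, abs_of_nonneg (Real.rpow_nonneg (by nlinarith [hy.1, hy.2]) _)]
      exact Real.rpow_le_rpow_of_nonpos h1y hle (by norm_num)

/-- If `|U(y)| ≤ A(1-y²)(1+|ln(1-y²)|)` and `|U'(y)| ≤ A(1+|ln(1-y²)|)` on `(-1,1)`,
then `y|U'|² - ((2-y²)/(1-y²))U - (y/(1-y²))U²` is absolutely integrable on `(-1,1)`,
so the constant `b` is well defined and finite. -/
theorem stmt14 (A : ℝ) (hA : 0 < A) (U : ℝ → ℝ)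
    (hUc : ContinuousOn U (Icc (-1) 1)) (hU1 : ContDiffOn ℝ 1 U (Ioo (-1) 1))
    (hU : ∀ y ∈ Ioo (-1 : ℝ) 1, |U y| ≤ A * (1 - y ^ 2) * (1 + |Real.log (1 - y ^ 2)|))
    (hU' : ∀ y ∈ Ioo (-1 : ℝ) 1, |deriv U y| ≤ A * (1 + |Real.log (1 - y ^ 2)|)) :
    IntegrableOn
      (fun y : ℝ => y * |deriv U y| ^ 2 - ((2 - y ^ 2) / (1 - y ^ 2)) * U y
        - (y / (1 - y ^ 2)) * (U y) ^ 2)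
      (Ioo (-1 : ℝ) 1) := by
  have hpos : ∀ y ∈ Ioo (-1 : ℝ) 1, 0 < 1 - y ^ 2 := by
    intro y hy; nlinarith [hy.1, hy.2]
  -- dominating function
  have hg : IntegrableOn
      (fun y : ℝ => (32 * A ^ 2 + 32 * A) * (1 - y ^ 2) ^ (-(1/2) : ℝ))
      (Ioo (-1 : ℝ) 1) := aux_integrable.const_mul _
  apply Integrable.mono' hg
  · -- measurability
    have hUm : AEStronglyMeasurable U (volume.restrict (Ioo (-1 : ℝ) 1)) :=
      (hUc.mono Ioo_subset_Icc_self).aestronglyMeasurable measurableSet_Ioo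
    have hd : AEStronglyMeasurable (fun y => |deriv U y| ^ 2)
        (volume.restrict (Ioo (-1 : ℝ) 1)) :=
      (((measurable_deriv U).abs).pow_const 2).aestronglyMeasurable
    have hc1 : ContinuousOn (fun y : ℝ => (2 - y ^ 2) / (1 - y ^ 2)) (Ioo (-1 : ℝ) 1) := by
      apply ContinuousOn.div (by fun_prop) (by fun_prop)
      intro y hy; exact (hpos y hy).ne'
    have hc2 : ContinuousOn (fun y : ℝ => y / (1 - y ^ 2)) (Ioo (-1 : ℝ) 1) := by
      apply ContinuousOn.div (by fun_prop) (by fun_prop)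
      intro y hy; exact (hpos y hy).ne'
    have h1 : AEStronglyMeasurable (fun y : ℝ => y * |deriv U y| ^ 2)
        (volume.restrict (Ioo (-1 : ℝ) 1)) :=
      aestronglyMeasurable_id.mul hd
    have h2 : AEStronglyMeasurable (fun y : ℝ => ((2 - y ^ 2) / (1 - y ^ 2)) * U y)
        (volume.restrict (Ioo (-1 : ℝ) 1)) :=
      (hc1.aestronglyMeasurable measurableSet_Ioo).mul hUm
    have h3 : AEStronglyMeasurable (fun y : ℝ => (y / (1 - y ^ 2)) * (U y) ^ 2)
        (volume.restrict (Ioo (-1 : ℝ) 1)) := by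
      have : (fun y : ℝ => (y / (1 - y ^ 2)) * (U y) ^ 2)
          = fun y : ℝ => (y / (1 - y ^ 2)) * (U y * U y) := by
        ext y; ring
      rw [this]
      exact (hc2.aestronglyMeasurable measurableSet_Ioo).mul (hUm.mul hUm)
    exact (h1.sub h2).sub h3
  · -- pointwise bound
    rw [ae_restrict_iff' measurableSet_Ioo]
    filter_upwards with y hy
    set t : ℝ := 1 - y ^ 2 with ht_def
    have ht0 : 0 < t := hpos y hy
    have ht1 : t ≤ 1 := by nlinarith [sq_nonneg y]
    set L : ℝ := 1 + |Real.log t| with hL_def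
    have hL1 : 1 ≤ L := by
      have := abs_nonneg (Real.log t); simp only [hL_def]; linarith
    have hbU : |U y| ≤ A * t * L := hU y hy
    have hbU' : |deriv U y| ≤ A * L := hU' y hy
    have hyabs : |y| ≤ 1 := by
      rw [abs_le]; exact ⟨hy.1.le, hy.2.le⟩
    have hsq : L ^ 2 ≤ 16 * t ^ (-(1/2) : ℝ) := aux_sq_log_bound ht0 ht1
    rw [Real.norm_eq_abs]
    have e1 : |y * |deriv U y| ^ 2| ≤ A ^ 2 * L ^ 2 := by
      rw [abs_mul, abs_pow, abs_abs]
      calc |y| * |deriv U y| ^ 2 ≤ 1 * (A * L) ^ 2 := by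
            apply mul_le_mul hyabs (pow_le_pow_left₀ (abs_nonneg _) hbU' 2)
              (by positivity) one_pos.le
        _ = A ^ 2 * L ^ 2 := by ring
    have e2 : |((2 - y ^ 2) / t) * U y| ≤ 2 * A * L := by
      rw [abs_mul, abs_div]
      have h2y : |2 - y ^ 2| = 2 - y ^ 2 := abs_of_nonneg (by nlinarith [sq_nonneg y])
      have htabs : |t| = t := abs_of_pos ht0
      rw [h2y, htabs]
      calc (2 - y ^ 2) / t * |U y| ≤ (2 / t) * (A * t * L) := by
            apply mul_le_mul _ hbU (abs_nonneg _) (by positivity)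
            apply div_le_div_of_nonneg_right _ ht0.le
            · nlinarith [sq_nonneg y]
        _ = 2 * A * L := by field_simp
    have e3 : |(y / t) * (U y) ^ 2| ≤ A ^ 2 * L ^ 2 := by
      rw [abs_mul, abs_div]
      have htabs : |t| = t := abs_of_pos ht0
      rw [htabs, abs_of_nonneg (sq_nonneg (U y))]
      have hUsq : (U y) ^ 2 ≤ (A * t * L) ^ 2 := by
        rw [← sq_abs (U y)]
        exact pow_le_pow_left₀ (abs_nonneg _) hbU 2
      calc |y| / t * (U y) ^ 2 ≤ (1 / t) * (A * t * L) ^ 2 := by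
            apply mul_le_mul _ hUsq (sq_nonneg _) (by positivity)
            exact div_le_div_of_nonneg_right hyabs ht0.le
        _ = A ^ 2 * t * L ^ 2 := by field_simp
        _ ≤ A ^ 2 * 1 * L ^ 2 := by
            apply mul_le_mul_of_nonneg_right _ (sq_nonneg L)
            exact mul_le_mul_of_nonneg_left ht1 (sq_nonneg A)
        _ = A ^ 2 * L ^ 2 := by ring
    have tri : ∀ a b : ℝ, |a - b| ≤ |a| + |b| := by
      intro a b
      rw [sub_eq_add_neg]
      exact (abs_add_le a (-b)).trans (by rw [abs_neg])
    have hsum : |y * |deriv U y| ^ 2 - ((2 - y ^ 2) / t) * U y - (y / t) * (U y) ^ 2|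
        ≤ 2 * A ^ 2 * L ^ 2 + 2 * A * L := by
      calc |y * |deriv U y| ^ 2 - ((2 - y ^ 2) / t) * U y - (y / t) * (U y) ^ 2|
          ≤ |y * |deriv U y| ^ 2 - ((2 - y ^ 2) / t) * U y| + |(y / t) * (U y) ^ 2| :=
            tri _ _
        _ ≤ |y * |deriv U y| ^ 2| + |((2 - y ^ 2) / t) * U y| + |(y / t) * (U y) ^ 2| := by
            linarith [tri (y * |deriv U y| ^ 2) (((2 - y ^ 2) / t) * U y)]
        _ ≤ A ^ 2 * L ^ 2 + 2 * A * L + A ^ 2 * L ^ 2 := by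
            exact add_le_add (add_le_add e1 e2) e3
        _ = 2 * A ^ 2 * L ^ 2 + 2 * A * L := by ring
    have hLL : L ≤ L ^ 2 := by nlinarith
    calc |y * |deriv U y| ^ 2 - ((2 - y ^ 2) / t) * U y - (y / t) * (U y) ^ 2|
        ≤ 2 * A ^ 2 * L ^ 2 + 2 * A * L := hsum
      _ ≤ (2 * A ^ 2 + 2 * A) * L ^ 2 := by nlinarith
      _ ≤ (2 * A ^ 2 + 2 * A) * (16 * t ^ (-(1/2) : ℝ)) := by
          apply mul_le_mul_of_nonneg_left hsq (by positivity)
      _ = (32 * A ^ 2 + 32 * A) * t ^ (-(1/2) : ℝ) := by ring
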